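/- arXiv:2502.01424 — 7 statements merged into one kernel-verified Lean document; each statement's English description precedes it below -/
import Mathlib

section
/- For every p in (0,1], the function t ↦ f_p(t)(1-t) on [0,1), where f_p(t) = (1/2) Σ_{n≥0} t^n/(1+pn), equals 1/2 - (p/2) Σ_{n≥0} t^{n+1}/((1+pn)(1+p(n+1))), and in particular it is strictly decreasing on [0,1). -/
open Real Set

lemma denom_pos (p : ℝ) (hp : 0 < p) (n : ℕ) : 0 < 1 + p * n := by
  positivity

lemma summable_A (p t : ℝ) (hp : 0 < p) (ht0 : 0 ≤ t) (ht1 : t < 1) :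
    Summable (fun n : ℕ => t ^ n / (1 + p * n)) := by
  refine Summable.of_nonneg_of_le (fun n => by positivity) (fun n => ?_)
    (summable_geometric_of_lt_one ht0 ht1)
  rw [div_le_iff₀ (denom_pos p hp n)]
  nlinarith [pow_nonneg ht0 n, mul_nonneg hp.le (Nat.cast_nonneg n),
    mul_nonneg (pow_nonneg ht0 n) (mul_nonneg hp.le (Nat.cast_nonneg (α := ℝ) n))]

lemma summable_shift (p t : ℝ) (hp : 0 < p) (ht0 : 0 ≤ t) (ht1 : t < 1) :
    Summable (fun n : ℕ => t ^ (n+1) / (1 + p * (n+1))) := by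
  refine Summable.of_nonneg_of_le (fun n => by positivity) (fun n => ?_)
    ((summable_geometric_of_lt_one ht0 ht1).mul_left t)
  rw [pow_succ, mul_comm (t ^ n) t]
  rw [div_le_iff₀ (by positivity)]
  have h1 : (1:ℝ) ≤ 1 + p * (n+1) := by
    have hn : (0:ℝ) ≤ (n:ℝ) := Nat.cast_nonneg n
    nlinarith
  exact le_mul_of_one_le_right (by positivity) h1

lemma summable_S (p t : ℝ) (hp : 0 < p) (ht0 : 0 ≤ t) (ht1 : t < 1) :
    Summable (fun n : ℕ => t ^ (n+1) / ((1 + p * n) * (1 + p * (n+1)))) := by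
  refine Summable.of_nonneg_of_le (fun n => by positivity) (fun n => ?_)
    ((summable_geometric_of_lt_one ht0 ht1).mul_left t)
  rw [pow_succ, mul_comm (t ^ n) t]
  rw [div_le_iff₀ (by positivity)]
  have h1 : (1:ℝ) ≤ (1 + p * n) * (1 + p * (n+1)) := by
    have hn : (0:ℝ) ≤ (n:ℝ) := Nat.cast_nonneg n
    nlinarith [mul_nonneg (mul_nonneg hp.le hn) (mul_nonneg hp.le (by linarith : (0:ℝ) ≤ (n:ℝ)+1))]
  exact le_mul_of_one_le_right (by positivity) h1

lemma key_eq (p t : ℝ) (hp : 0 < p) (ht0 : 0 ≤ t) (ht1 : t < 1) :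
    (∑' n : ℕ, t ^ n / (1 + p * n)) * (1 - t)
      = 1 - p * ∑' n : ℕ, t ^ (n+1) / ((1 + p * n) * (1 + p * (n+1))) := by
  have hA := summable_A p t hp ht0 ht1
  have hShift := summable_shift p t hp ht0 ht1
  have hS := summable_S p t hp ht0 ht1
  have htA : t * (∑' n : ℕ, t ^ n / (1 + p * n))
      = ∑' n : ℕ, t ^ (n+1) / (1 + p * n) := by
    rw [← tsum_mul_left]
    refine tsum_congr fun n => ?_
    rw [pow_succ, mul_comm (t ^ n) t, mul_div_assoc]
  have hAeq : (∑' n : ℕ, t ^ n / (1 + p * n))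
      = 1 + ∑' n : ℕ, t ^ (n+1) / (1 + p * (n+1)) := by
    rw [Summable.tsum_eq_zero_add hA]
    norm_num
  have hsub : (∑' n : ℕ, t ^ (n+1) / (1 + p * (n+1)))
      - (∑' n : ℕ, t ^ (n+1) / (1 + p * n))
      = ∑' n : ℕ, (t ^ (n+1) / (1 + p * (n+1)) - t ^ (n+1) / (1 + p * n)) := by
    have h2 : Summable (fun n : ℕ => t ^ (n+1) / (1 + p * n)) := by
      have : Summable (fun n : ℕ => t * (t ^ n / (1 + p * n))) := hA.mul_left t
      refine this.congr fun n => ?_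
      rw [pow_succ, mul_comm (t ^ n) t, mul_div_assoc]
    exact (Summable.tsum_sub hShift h2).symm
  have hterm : ∀ n : ℕ, t ^ (n+1) / (1 + p * (n+1)) - t ^ (n+1) / (1 + p * n)
      = -(p * (t ^ (n+1) / ((1 + p * n) * (1 + p * (n+1))))) := by
    intro n
    have h1 := (denom_pos p hp n).ne'
    have h2 := (denom_pos p hp (n+1)).ne'
    push_cast at h2 ⊢
    field_simp
    ring
  have : (∑' n : ℕ, (t ^ (n+1) / (1 + p * (n+1)) - t ^ (n+1) / (1 + p * n)))
      = -(p * ∑' n : ℕ, t ^ (n+1) / ((1 + p * n) * (1 + p * (n+1)))) := by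
    rw [← tsum_mul_left, ← tsum_neg]
    exact tsum_congr hterm
  have expand : (∑' n : ℕ, t ^ n / (1 + p * n)) * (1 - t)
      = (∑' n : ℕ, t ^ n / (1 + p * n)) - t * (∑' n : ℕ, t ^ n / (1 + p * n)) := by
    ring
  rw [expand, htA, hAeq]
  linarith [hsub, this]

/-- For `p ∈ (0,1]`, the function `t ↦ f_p(t)(1-t)` on `[0,1)`, where
`f_p(t) = (1/2) Σ_{n≥0} t^n/(1+pn)`, equals
`1/2 - (p/2) Σ_{n≥0} t^{n+1}/((1+pn)(1+p(n+1)))`, and is strictly decreasing on `[0,1)`. -/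
theorem fp_one_sub_t_series (p : ℝ) (hp : p ∈ Set.Ioc (0:ℝ) 1) :
    (∀ t ∈ Set.Ico (0:ℝ) 1,
      ((1/2) * ∑' n : ℕ, t ^ n / (1 + p * n)) * (1 - t)
        = 1/2 - (p/2) * ∑' n : ℕ, t ^ (n+1) / ((1 + p * n) * (1 + p * (n+1))))
    ∧ StrictAntiOn (fun t : ℝ => ((1/2) * ∑' n : ℕ, t ^ n / (1 + p * n)) * (1 - t))
        (Set.Ico (0:ℝ) 1) := by
  obtain ⟨hp0, hp1⟩ := hp
  have main : ∀ t ∈ Set.Ico (0:ℝ) 1,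
      ((1/2) * ∑' n : ℕ, t ^ n / (1 + p * n)) * (1 - t)
        = 1/2 - (p/2) * ∑' n : ℕ, t ^ (n+1) / ((1 + p * n) * (1 + p * (n+1))) := by
    intro t ⟨ht0, ht1⟩
    have := key_eq p t hp0 ht0 ht1
    nlinarith [this]
  refine ⟨main, ?_⟩
  intro s hs t ht hst
  dsimp only
  rw [main s hs, main t ht]
  have hSlt : (∑' n : ℕ, s ^ (n+1) / ((1 + p * n) * (1 + p * (n+1))))
      < ∑' n : ℕ, t ^ (n+1) / ((1 + p * n) * (1 + p * (n+1))) := by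
    refine Summable.tsum_lt_tsum (i := 0) (fun n => ?_) ?_
      (summable_S p s hp0 hs.1 hs.2) (summable_S p t hp0 ht.1 ht.2)
    · gcongr
      all_goals first
        | exact hs.1
        | exact hst.le
        | exact (mul_pos (denom_pos p hp0 n) (denom_pos p hp0 (n+1))).le
    · gcongr
      all_goals first
        | exact hs.1
        | exact hst
        | { push_cast; nlinarith }
  nlinarith [hSlt]
end

section
/- For every p in (0,1] and every t in (0,1), one has f_p(t)·(1-t) < 1/2, where f_p(t) = (1/2) Σ_{n≥0} t^n/(1+pn). Consequently f_p is strictly increasing on [0,1), so f_p: [0,1) → [1/2, ∞) is a bijection. -/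
open Real Set

section Aux

variable {p : ℝ}

private lemma aux_pos (hp : 0 < p) (n : ℕ) : (0:ℝ) < 1 + p * n := by
  have : (0:ℝ) ≤ p * n := by positivity
  linarith

private lemma aux_summable (hp : 0 < p) {t : ℝ} (ht0 : 0 ≤ t) (ht1 : t < 1) :
    Summable (fun n : ℕ => t ^ n / (1 + p * n)) := by
  refine Summable.of_nonneg_of_le (fun n => by positivity) (fun n => ?_)
    (summable_geometric_of_lt_one ht0 ht1)
  have h1 : (1:ℝ) ≤ 1 + p * n := by
    have : (0:ℝ) ≤ p * n := by positivity
    linarith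
  calc t ^ n / (1 + p * n) ≤ t ^ n / 1 := by
        apply div_le_div_of_nonneg_left (by positivity) one_pos h1
    _ = t ^ n := by ring

private lemma aux_ge_half (hp : 0 < p) {t : ℝ} (ht0 : 0 ≤ t) (ht1 : t < 1) :
    (1:ℝ) ≤ ∑' n : ℕ, t ^ n / (1 + p * n) := by
  have h := Summable.le_tsum (aux_summable hp ht0 ht1) 0 (fun j _ => by positivity)
  simpa using h

private lemma aux_at_zero (hp : 0 < p) :
    (∑' n : ℕ, (0:ℝ) ^ n / (1 + p * n)) = 1 := by
  rw [tsum_eq_single 0 (fun n hn => by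
    rw [zero_pow hn]; simp)]
  simp

private lemma aux_mono (hp : 0 < p) :
    StrictMonoOn (fun t : ℝ => (1/2) * ∑' n : ℕ, t ^ n / (1 + p * n)) (Set.Ico (0:ℝ) 1) := by
  intro a ha b hb hab
  have hsum_a := aux_summable hp ha.1 ha.2
  have hsum_b := aux_summable hp hb.1 hb.2
  have key : (∑' n : ℕ, a ^ n / (1 + p * n)) < ∑' n : ℕ, b ^ n / (1 + p * n) := by
    refine Summable.tsum_lt_tsum (i := 1) (fun n => ?_) ?_ hsum_a hsum_b
    · exact div_le_div_of_nonneg_right (pow_le_pow_left₀ ha.1 hab.le n) (aux_pos hp n).le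
    · simp only [pow_one]
      exact div_lt_div_of_pos_right hab (aux_pos hp 1)
  linarith

private lemma aux_contOn (hp : 0 < p) {r : ℝ} (hr0 : 0 ≤ r) (hr1 : r < 1) :
    ContinuousOn (fun t : ℝ => ∑' n : ℕ, t ^ n / (1 + p * n)) (Set.Icc 0 r) := by
  refine continuousOn_tsum (f := fun (n : ℕ) (t : ℝ) => t ^ n / (1 + p * n))
    (u := fun n => r ^ n) (fun n => ?_) (summable_geometric_of_lt_one hr0 hr1)
    (fun n x hx => ?_)
  · exact (continuous_pow n).continuousOn.div_const _
  · have hx0 : 0 ≤ x := hx.1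
    have hxr : x ≤ r := hx.2
    have h1 : (1:ℝ) ≤ 1 + p * n := by
      have : (0:ℝ) ≤ p * n := by positivity
      linarith
    rw [Real.norm_eq_abs, abs_of_nonneg (by positivity)]
    calc x ^ n / (1 + p * n) ≤ x ^ n / 1 :=
          div_le_div_of_nonneg_left (by positivity) one_pos h1
      _ = x ^ n := by ring
      _ ≤ r ^ n := pow_le_pow_left₀ hx0 hxr n

end Aux

/-- For `p ∈ (0,1]` and `t ∈ (0,1)`, `f_p(t)(1-t) < 1/2`, where
`f_p(t) = (1/2) Σ_{n≥0} t^n/(1+pn)`.  Consequently `f_p` is strictly increasing on `[0,1)`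
and maps `[0,1)` bijectively onto `[1/2,∞)`. -/
theorem fp_strict_bijection (p : ℝ) (hp : p ∈ Set.Ioc (0:ℝ) 1) :
    (∀ t ∈ Set.Ioo (0:ℝ) 1,
      ((1/2) * ∑' n : ℕ, t ^ n / (1 + p * n)) * (1 - t) < 1/2)
    ∧ StrictMonoOn (fun t : ℝ => (1/2) * ∑' n : ℕ, t ^ n / (1 + p * n)) (Set.Ico (0:ℝ) 1)
    ∧ Set.BijOn (fun t : ℝ => (1/2) * ∑' n : ℕ, t ^ n / (1 + p * n))
        (Set.Ico (0:ℝ) 1) (Set.Ici (1/2 : ℝ)) := by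
  obtain ⟨hp0, hp1⟩ := hp
  set f : ℝ → ℝ := fun t : ℝ => (1/2) * ∑' n : ℕ, t ^ n / (1 + p * n) with hf
  refine ⟨?_, aux_mono hp0, ?_⟩
  · -- Part 1: inequality
    intro t ht
    obtain ⟨ht0, ht1⟩ := ht
    have hsum := aux_summable hp0 ht0.le ht1
    have hgeo : Summable (fun n : ℕ => t ^ n) := summable_geometric_of_lt_one ht0.le ht1
    have key : (∑' n : ℕ, t ^ n / (1 + p * n)) < ∑' n : ℕ, t ^ n := by
      refine Summable.tsum_lt_tsum (i := 1) (fun n => ?_) ?_ hsum hgeo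
      · have h1 : (1:ℝ) ≤ 1 + p * n := by
          have : (0:ℝ) ≤ p * n := by positivity
          linarith
        calc t ^ n / (1 + p * n) ≤ t ^ n / 1 :=
              div_le_div_of_nonneg_left (by positivity) one_pos h1
          _ = t ^ n := by ring
      · simp only [pow_one, Nat.cast_one]
        have h1 : (1:ℝ) < 1 + p * 1 := by linarith
        calc t / (1 + p * 1) < t / 1 :=
              div_lt_div_of_pos_left ht0 one_pos h1
          _ = t := by ring
    rw [tsum_geometric_of_lt_one ht0.le ht1] at key
    have h1t : 0 < 1 - t := by linarith
    calc ((1/2) * ∑' n : ℕ, t ^ n / (1 + p * n)) * (1 - t)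
        < ((1/2) * (1 - t)⁻¹) * (1 - t) := by
          apply mul_lt_mul_of_pos_right _ h1t
          linarith
      _ = 1/2 := by
          field_simp
  · -- Part 3: BijOn
    refine ⟨?_, (aux_mono hp0).injOn, ?_⟩
    · intro t ht
      have := aux_ge_half hp0 ht.1 ht.2
      simp only [Set.mem_Ici, hf]
      linarith
    · -- SurjOn
      intro y hy
      simp only [Set.mem_Ici] at hy
      -- find b ∈ [0,1) with f b ≥ y
      obtain ⟨b, hb0, hb1, hfb⟩ : ∃ b : ℝ, 0 ≤ b ∧ b < 1 ∧ y ≤ f b := by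
        -- choose N with harmonic partial sum ≥ 4y+4
        obtain ⟨N, hN'⟩ :=
          (Real.tendsto_sum_range_one_div_nat_succ_atTop.eventually_ge_atTop
            (4 * y + 4)).exists
        have hN1 : 1 ≤ N := by
          by_contra h
          push_neg at h
          have hN0 : N = 0 := by omega
          subst hN0
          simp at hN'
          linarith
        set b : ℝ := 1 - 1 / (2 * N) with hbdef
        have hNpos : (0:ℝ) < N := by exact_mod_cast hN1
        have hN1' : (1:ℝ) ≤ N := by exact_mod_cast hN1
        have hb0 : 0 ≤ b := by
          have : 1 / (2 * (N:ℝ)) ≤ 1 / 2 := by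
            apply div_le_div_of_nonneg_left one_pos.le (by norm_num)
            linarith
          simp only [hbdef]; linarith
        have hb1 : b < 1 := by
          have : 0 < 1 / (2 * (N:ℝ)) := by positivity
          simp only [hbdef]; linarith
        -- Bernoulli: b^N ≥ 1 - N/(2N) = 1/2
        have hbern : (1:ℝ)/2 ≤ b ^ N := by
          have := one_add_mul_le_pow (a := -(1 / (2 * (N:ℝ)))) (by
            have : 1 / (2 * (N:ℝ)) ≤ 1 / 2 := by
              apply div_le_div_of_nonneg_left one_pos.le (by norm_num)
              linarith
            linarith) N
          have heq : (1:ℝ) + (-(1 / (2 * (N:ℝ)))) = b := by simp [hbdef]; ring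
          rw [heq] at this
          have : 1 + (N:ℝ) * (-(1 / (2 * N))) = 1/2 := by field_simp; ring
          calc (1:ℝ)/2 = 1 + (N:ℝ) * (-(1 / (2 * N))) := by field_simp; ring
            _ ≤ b ^ N := one_add_mul_le_pow (by
                have : 1 / (2 * (N:ℝ)) ≤ 1 / 2 := by
                  apply div_le_div_of_nonneg_left one_pos.le (by norm_num)
                  linarith
                linarith) N |>.trans_eq (by rw [heq])
        refine ⟨b, hb0, hb1, ?_⟩
        have hlow : ∑ n ∈ Finset.range N, b ^ N * (1 / ((n:ℝ) + 1))
            ≤ ∑' n : ℕ, b ^ n / (1 + p * n) := by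
          refine le_trans (Finset.sum_le_sum (fun n hn => ?_))
            (Summable.sum_le_tsum _ (fun n _ => by positivity) (aux_summable hp0 hb0 hb1))
          have hn' : n < N := Finset.mem_range.1 hn
          have h1 : b ^ N ≤ b ^ n := pow_le_pow_of_le_one hb0 hb1.le hn'.le
          have h2 : 1 + p * n ≤ (n:ℝ) + 1 := by
            have : p * n ≤ 1 * n := by
              apply mul_le_mul_of_nonneg_right hp1 (Nat.cast_nonneg n)
            linarith
          have hpos : (0:ℝ) < 1 + p * n := aux_pos hp0 n
          calc b ^ N * (1 / ((n:ℝ) + 1)) = b ^ N / ((n:ℝ) + 1) := by ring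
            _ ≤ b ^ n / ((n:ℝ) + 1) := by
                apply div_le_div_of_nonneg_right h1 (by positivity)
            _ ≤ b ^ n / (1 + p * n) :=
                div_le_div_of_nonneg_left (by positivity) hpos h2
        have hsum_eq : ∑ n ∈ Finset.range N, b ^ N * (1 / ((n:ℝ) + 1))
            = b ^ N * ∑ n ∈ Finset.range N, (1 / ((n:ℝ) + 1)) := by
          rw [Finset.mul_sum]
        have hbig : 2 * y ≤ ∑' n : ℕ, b ^ n / (1 + p * n) := by
          have h1 : b ^ N * (4 * y + 4) ≤ b ^ N * ∑ i ∈ Finset.range N, (1:ℝ) / (i + 1) :=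
            mul_le_mul_of_nonneg_left hN' (by positivity)
          have h2 : (1/2 : ℝ) * (4 * y + 4) ≤ b ^ N * (4 * y + 4) := by
            apply mul_le_mul_of_nonneg_right hbern
            linarith
          calc (2:ℝ) * y ≤ (1/2) * (4 * y + 4) := by linarith
            _ ≤ b ^ N * (4 * y + 4) := h2
            _ ≤ b ^ N * ∑ i ∈ Finset.range N, (1:ℝ) / (i + 1) := h1
            _ = ∑ n ∈ Finset.range N, b ^ N * (1 / ((n:ℝ) + 1)) := hsum_eq.symm
            _ ≤ _ := hlow
        simp only [hf]
        linarith
      -- IVT on [0, b]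
      have hcont : ContinuousOn f (Set.Icc 0 b) := by
        simp only [hf]
        exact ((aux_contOn hp0 hb0 hb1).const_smul (1/2 : ℝ))
      have hf0 : f 0 = 1/2 := by
        simp only [hf]
        rw [aux_at_zero hp0]; norm_num
      have hmem : y ∈ Set.Icc (f 0) (f b) := by
        rw [hf0]; exact ⟨hy, hfb⟩
      obtain ⟨t, ht, hft⟩ := intermediate_value_Icc hb0 hcont hmem
      exact ⟨t, ⟨ht.1, lt_of_le_of_lt ht.2 hb1⟩, hft⟩
end

section
/- Let p ∈ (0,1] and let g_p: [1/2,∞) → [0,1) be the inverse of f_p, where f_p(s) = (1/2) Σ_{n≥0} s^n/(1+pn). Then g_p is differentiable on (1/2,∞) and satisfies the differential equation g_p'(t) = 2p·g_p(t)·(1-g_p(t)) / (1 - 2t(1-g_p(t))) for all t > 1/2, with g_p(1/2) = 0. -/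
/-!
With `W(s) = Σ sⁿ/(1+pn)` we have `f = W/2`. Since `p n sⁿ/(1+pn) = sⁿ - sⁿ/(1+pn)`,
termwise differentiation gives the linear ODE `p s W'(s) = 1/(1-s) - W(s)`, and
`W(s) < 1/(1-s)` on `(0,1)`, so `f'` is positive there. The inverse function rule, together
with `f(g t) = t`, turns the ODE for `f` into the one for `g`; `g(1/2) = 0` because `W(0) = 1`.
-/

open Real Set Filter Topology

theorem summable_natCast_mul_pow_sub_one {r : ℝ} (hr : |r| < 1) :
    Summable fun n : ℕ => (n : ℝ) * r ^ (n - 1) := by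
  refine (summable_nat_add_iff 1).1 ?_
  have hr' : ‖r‖ < 1 := by rwa [Real.norm_eq_abs]
  refine ((summable_pow_mul_geometric_of_norm_lt_one 1 hr').add
    (summable_geometric_of_abs_lt_one hr)).congr fun n => ?_
  push_cast
  simp only [pow_one]
  ring

noncomputable def weightedGeometricSeries (p s : ℝ) : ℝ := ∑' n : ℕ, s ^ n / (1 + p * n)

section

variable {p s : ℝ}

theorem one_le_one_add_mul_natCast (hp : 0 ≤ p) (n : ℕ) : 1 ≤ 1 + p * n := by
  have := mul_nonneg hp n.cast_nonneg
  linarith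

theorem abs_div_one_add_mul_natCast_le (hp : 0 ≤ p) (x : ℝ) (n : ℕ) :
    |x / (1 + p * n)| ≤ |x| := by
  rw [abs_div, abs_of_pos (zero_lt_one.trans_le (one_le_one_add_mul_natCast hp n))]
  exact div_le_self (abs_nonneg x) (one_le_one_add_mul_natCast hp n)

theorem summable_pow_div_one_add_mul (hp : 0 ≤ p) (hs : |s| < 1) :
    Summable fun n : ℕ => s ^ n / (1 + p * n) :=
  (summable_geometric_of_abs_lt_one (r := |s|) (by rwa [abs_abs])).of_norm_bounded fun n =>
    (abs_div_one_add_mul_natCast_le hp _ n).trans_eq (abs_pow s n)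

theorem weightedGeometricSeries_zero : weightedGeometricSeries p 0 = 1 := by
  rw [weightedGeometricSeries, tsum_eq_single 0 fun n hn => by simp [zero_pow hn]]
  simp

theorem weightedGeometricSeries_lt (hp : 0 < p) (hs₀ : 0 < s) (hs₁ : s < 1) :
    weightedGeometricSeries p s < (1 - s)⁻¹ := by
  rw [← tsum_geometric_of_lt_one hs₀.le hs₁]
  refine Summable.tsum_lt_tsum_of_nonneg (i := 1)
    (fun n => div_nonneg (pow_nonneg hs₀.le n) (by linarith [one_le_one_add_mul_natCast hp.le n]))
    (fun n => div_le_self (pow_nonneg hs₀.le n) (one_le_one_add_mul_natCast hp.le n)) ?_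
    (summable_geometric_of_lt_one hs₀.le hs₁)
  simpa using div_lt_self hs₀ (by linarith)

theorem hasDerivAt_weightedGeometricSeries_tsum (hp : 0 ≤ p) (hs : |s| < 1) :
    HasDerivAt (weightedGeometricSeries p) (∑' n : ℕ, n * s ^ (n - 1) / (1 + p * n)) s := by
  obtain ⟨r, hsr, hr⟩ := exists_between hs
  have hr' : |r| < 1 := by rwa [abs_of_pos ((abs_nonneg s).trans_lt hsr)]
  have hsr : s ∈ Ioo (-r) r := abs_lt.1 hsr
  refine hasDerivAt_tsum_of_isPreconnected
    (g' := fun (n : ℕ) (y : ℝ) => n * y ^ (n - 1) / (1 + p * n))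
    (summable_natCast_mul_pow_sub_one hr') isOpen_Ioo isPreconnected_Ioo
    (fun n y _ => (hasDerivAt_pow n y).div_const (1 + p * n))
    (fun n y hy => ?_) hsr (summable_pow_div_one_add_mul hp hs) hsr
  calc ‖n * y ^ (n - 1) / (1 + p * n)‖ ≤ |n * y ^ (n - 1)| :=
        abs_div_one_add_mul_natCast_le hp _ n
    _ = n * |y| ^ (n - 1) := by rw [abs_mul, abs_pow, Nat.abs_cast]
    _ ≤ n * r ^ (n - 1) := by
      gcongr
      exact (abs_lt.2 hy).le

theorem mul_tsum_deriv_weightedGeometricSeries (hp : 0 ≤ p) (hs : |s| < 1) :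
    p * s * ∑' n : ℕ, n * s ^ (n - 1) / (1 + p * n) =
      (1 - s)⁻¹ - weightedGeometricSeries p s := by
  have hterm (n : ℕ) :
      p * s * (n * s ^ (n - 1) / (1 + p * n)) = s ^ n - s ^ n / (1 + p * n) := by
    have := one_le_one_add_mul_natCast hp n
    rcases n with _ | n
    · simp
    · field_simp
      simp only [Nat.add_sub_cancel]
      ring
  rw [← tsum_mul_left, funext hterm, Summable.tsum_sub (summable_geometric_of_abs_lt_one hs)
    (summable_pow_div_one_add_mul hp hs), tsum_geometric_of_abs_lt_one hs, weightedGeometricSeries]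

theorem hasDerivAt_weightedGeometricSeries (hp : 0 < p) (hs₀ : s ≠ 0) (hs : |s| < 1) :
    HasDerivAt (weightedGeometricSeries p)
      (((1 - s)⁻¹ - weightedGeometricSeries p s) / (p * s)) s := by
  refine (hasDerivAt_weightedGeometricSeries_tsum hp.le hs).congr_deriv ?_
  rw [← mul_tsum_deriv_weightedGeometricSeries hp.le hs]
  exact (mul_div_cancel_left₀ _ (mul_ne_zero hp.ne' hs₀)).symm

end

theorem continuousAt_of_strictMonoOn_of_leftInverse {α β : Type*} [LinearOrder α]
    [TopologicalSpace α] [OrderTopology α] [DenselyOrdered α] [NoMinOrder α] [NoMaxOrder α]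
    [LinearOrder β] [TopologicalSpace β] [OrderTopology β] {f : α → β} {g : β → α}
    {s : Set α} {t : β} (hf : StrictMonoOn f s) (hs : s ∈ 𝓝 (g t))
    (hg : ∀ᶠ y in 𝓝 t, g y ∈ s ∧ f (g y) = y) : ContinuousAt g t := by
  have hft : f (g t) = t := hg.self_of_nhds.2
  refine tendsto_order.2 ⟨fun a ha => ?_, fun b hb => ?_⟩
  · obtain ⟨l, hl, hls⟩ := exists_Ioc_subset_of_mem_nhds hs (exists_lt _)
    obtain ⟨c, hc, hct⟩ := exists_between (max_lt ha hl)
    have hcs : c ∈ s := hls ⟨(le_max_right _ _).trans_lt hc, hct.le⟩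
    have hfc : f c < t := hft ▸ hf hcs (mem_of_mem_nhds hs) hct
    filter_upwards [hg, eventually_gt_nhds hfc] with y ⟨hys, hfy⟩ hy
    refine (le_max_left a l).trans_lt (hc.trans_le ?_)
    by_contra! h
    exact (hfy ▸ hf.monotoneOn hys hcs h.le).not_gt hy
  · obtain ⟨u, hu, hus⟩ := exists_Ico_subset_of_mem_nhds hs (exists_gt _)
    obtain ⟨c, htc, hc⟩ := exists_between (lt_min hb hu)
    have hcs : c ∈ s := hus ⟨htc.le, hc.trans_le (min_le_right _ _)⟩
    have hfc : t < f c := hft ▸ hf (mem_of_mem_nhds hs) hcs htc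
    filter_upwards [hg, eventually_lt_nhds hfc] with y ⟨hys, hfy⟩ hy
    refine ((not_le.1 fun h => ?_).trans hc).trans_le (min_le_left b u)
    exact (hfy ▸ hf.monotoneOn hcs hys h).not_gt hy

theorem gel_mass_ODE_general (p : ℝ) (hp : p ∈ Set.Ioc (0:ℝ) 1)
    (f : ℝ → ℝ) (hf : f = fun s : ℝ => (1/2) * ∑' n : ℕ, s ^ n / (1 + p * n))
    (hmono : StrictMonoOn f (Set.Ico (0:ℝ) 1))
    (g : ℝ → ℝ)
    (hgmem : ∀ t ∈ Set.Ici (1/2 : ℝ), g t ∈ Set.Ico (0:ℝ) 1)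
    (hginv : ∀ t ∈ Set.Ici (1/2 : ℝ), f (g t) = t) :
    g (1/2) = 0 ∧
      ∀ t > (1/2 : ℝ),
        HasDerivAt g (2 * p * g t * (1 - g t) / (1 - 2 * t * (1 - g t))) t := by
  replace hf : f = fun s => 1 / 2 * weightedGeometricSeries p s := hf
  have hf₀ : f 0 = 1 / 2 := by simp [hf, weightedGeometricSeries_zero]
  have hg_half : g (1 / 2) = 0 :=
    hmono.injOn (hgmem _ self_mem_Ici) ⟨le_rfl, one_pos⟩ (by rw [hginv _ self_mem_Ici, hf₀])
  refine ⟨hg_half, fun t ht => ?_⟩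
  obtain ⟨hs_nonneg, hs₁⟩ := hgmem t ht.le
  have hft : f (g t) = t := hginv t ht.le
  have hs₀ : 0 < g t := hs_nonneg.lt_of_ne fun h => by rw [← h, hf₀] at hft; linarith
  have hs₁' : 0 < 1 - g t := by linarith
  have hW : weightedGeometricSeries p (g t) = 2 * t := by simp only [hf] at hft; linarith
  have hpos : 0 < 1 - 2 * t * (1 - g t) := by
    have := weightedGeometricSeries_lt hp.1 hs₀ hs₁
    rw [hW, ← one_div, lt_div_iff₀ (by linarith)] at this
    linarith
  have hderiv : HasDerivAt f ((1 - 2 * t * (1 - g t)) / (2 * p * g t * (1 - g t))) (g t) := by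
    rw [hf]
    refine ((hasDerivAt_weightedGeometricSeries hp.1 hs₀.ne' ?_).const_mul (1 / 2)).congr_deriv ?_
    · rw [abs_of_pos hs₀]; exact hs₁
    · rw [hW]
      have := hs₁'.ne'
      field_simp
  have hinv : ∀ᶠ y in 𝓝 t, g y ∈ Ico 0 1 ∧ f (g y) = y := by
    filter_upwards [eventually_gt_nhds ht] with y hy using ⟨hgmem y hy.le, hginv y hy.le⟩
  have hcont : ContinuousAt g t :=
    continuousAt_of_strictMonoOn_of_leftInverse hmono (Ico_mem_nhds hs₀ hs₁) hinv
  have := hderiv.of_local_left_inverse hcont (div_pos hpos (by have := hp.1; positivity)).ne'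
    (hinv.mono fun _ => And.right)
  rwa [inv_div] at this

/-- Let `p ∈ (0,1]` and let `g` be the inverse on `[1/2,∞)` of
`f_p(s) = (1/2) Σ_{n≥0} s^n/(1+pn)` (which may be assumed to be a strictly increasing
bijection from `[0,1)` onto `[1/2,∞)`). Then `g(1/2) = 0` and `g` is differentiable on
`(1/2,∞)` with `g'(t) = 2p g(t)(1-g(t))/(1 - 2t(1-g(t)))`. -/
theorem gel_mass_ODE (p : ℝ) (hp : p ∈ Set.Ioc (0:ℝ) 1)
    (f : ℝ → ℝ) (hf : f = fun s : ℝ => (1/2) * ∑' n : ℕ, s ^ n / (1 + p * n))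
    (hmono : StrictMonoOn f (Set.Ico (0:ℝ) 1))
    (hbij : Set.BijOn f (Set.Ico (0:ℝ) 1) (Set.Ici (1/2 : ℝ)))
    (g : ℝ → ℝ)
    (hgmem : ∀ t ∈ Set.Ici (1/2 : ℝ), g t ∈ Set.Ico (0:ℝ) 1)
    (hginv : ∀ t ∈ Set.Ici (1/2 : ℝ), f (g t) = t) :
    g (1/2) = 0 ∧
      ∀ t > (1/2 : ℝ),
        HasDerivAt g (2 * p * g t * (1 - g t) / (1 - 2 * t * (1 - g t))) t :=
  gel_mass_ODE_general p hp f hf hmono g hgmem hginv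
end

section
/- Let p ∈ (0,1] and suppose (g,d) is a solution of the system g'(t) = 2p·g(t)(1-g(t))^2/(1-2t+g(t)+2d(t)), d'(t) = 2(1-p)g(t)(1-g(t)) + g(t)^2 on (1/2,∞) with initial values g(1/2)=a ∈ [0,1), d(1/2)=b ≥ 0. Define r(t) = (t + ε - g(t) - d(t))/(1 - g(t)) for ε ≥ 0 (the case ε = b + a²/2 relevant) and δ = (ε - b - a²/2)/(1-a)². Then the function h(t) = r(t) - (t+δ)(1-g(t)) satisfies h(1/2)=0 and h'(t) = -h(t)·g'(t)/(1-g(t)), hence h ≡ 0; i.e. (t+ε-g(t)-d(t))/(1-g(t)) = (t+δ)(1-g(t)) for all t ≥ 1/2. -/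
open Real Set

/-!
Writing `M = t + ε - g - d` and `u = 1 - g`, the denominator of the `g`-equation is `u - 2M`,
and the system gives `M' u + 2 M g' = u³`. Hence `M / u² - t` is a first integral; its value at
`t = 1/2` is `δ`, so `M / u² = t + δ`, i.e. `h = u (M / u² - t - δ)` vanishes identically.
-/

theorem eq_of_hasDerivAt_zero_of_continuousOn_Ici {f : ℝ → ℝ} {a x : ℝ}
    (hf : ContinuousOn f (Ici a)) (hf' : ∀ y > a, HasDerivAt f 0 y) (hx : a ≤ x) :
    f x = f a := by
  rcases hx.eq_or_lt with rfl | hlt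
  · rfl
  obtain ⟨c, _, hc⟩ := exists_hasDerivAt_eq_slope f (fun _ => 0) hlt
    (hf.mono Icc_subset_Ici_self) fun y hy => hf' y hy.1
  rw [eq_comm, div_eq_zero_iff, sub_eq_zero, sub_eq_zero] at hc
  exact hc.resolve_right hlt.ne'

theorem hasDerivAt_ratio_first_integral {p ε t : ℝ} {g d : ℝ → ℝ} (hg1 : 1 - g t ≠ 0)
    (hQ : 1 - 2 * (t + ε) + g t + 2 * d t ≠ 0)
    (hg : HasDerivAt g (2 * p * g t * (1 - g t) ^ 2 / (1 - 2 * (t + ε) + g t + 2 * d t)) t)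
    (hd : HasDerivAt d (2 * (1 - p) * g t * (1 - g t) + g t ^ 2) t) :
    HasDerivAt (fun s => (s + ε - g s - d s) / (1 - g s) ^ 2 - s) 0 t := by
  have hM : HasDerivAt (fun s => s + ε - g s - d s) _ t :=
    (((hasDerivAt_id t).add_const ε).sub hg).sub hd
  have hu : HasDerivAt (fun s => (1 - g s) ^ 2) _ t := (hg.const_sub 1).pow 2
  refine ((hM.div hu (pow_ne_zero 2 hg1)).sub (hasDerivAt_id t)).congr_deriv ?_
  field_simp
  ring

theorem ratio_identity_general (p ε a b : ℝ)
    (δ : ℝ) (hδ : δ = (ε - b - a ^ 2 / 2) / (1 - a) ^ 2)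
    (g d : ℝ → ℝ)
    (hgmem : ∀ t ∈ Set.Ici (1/2 : ℝ), g t ∈ Set.Ico a 1)
    (hgc : ContinuousOn g (Set.Ici (1/2 : ℝ)))
    (hdc : ContinuousOn d (Set.Ici (1/2 : ℝ)))
    (hg0 : g (1/2) = a) (hd0 : d (1/2) = b)
    (hpos : ∀ t > (1/2 : ℝ), 0 < 1 - 2 * (t + ε) + g t + 2 * d t)
    (hgode : ∀ t > (1/2 : ℝ),
      HasDerivAt g (2 * p * g t * (1 - g t) ^ 2 / (1 - 2 * (t + ε) + g t + 2 * d t)) t)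
    (hdode : ∀ t > (1/2 : ℝ),
      HasDerivAt d (2 * (1 - p) * g t * (1 - g t) + g t ^ 2) t) :
    ((1/2 : ℝ) + ε - g (1/2) - d (1/2)) / (1 - g (1/2)) - ((1/2 : ℝ) + δ) * (1 - g (1/2)) = 0 ∧
    (∀ t > (1/2 : ℝ),
      HasDerivAt (fun s => (s + ε - g s - d s) / (1 - g s) - (s + δ) * (1 - g s))
        (-((t + ε - g t - d t) / (1 - g t) - (t + δ) * (1 - g t)) *
            (2 * p * g t * (1 - g t) ^ 2 / (1 - 2 * (t + ε) + g t + 2 * d t)) / (1 - g t)) t) ∧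
    ∀ t ∈ Set.Ici (1/2 : ℝ),
      (t + ε - g t - d t) / (1 - g t) = (t + δ) * (1 - g t) := by
  have hu : ∀ t ∈ Ici (1/2 : ℝ), 1 - g t ≠ 0 := fun t ht => sub_ne_zero.2 (hgmem t ht).2.ne'
  have hcont : ContinuousOn (fun s => (s + ε - g s - d s) / (1 - g s) ^ 2 - s) (Ici (1/2)) :=
    ((((continuousOn_id.add continuousOn_const).sub hgc).sub hdc).div
      ((continuousOn_const.sub hgc).pow 2) fun t ht => pow_ne_zero 2 (hu t ht)).sub continuousOn_id
  have hinit : ((1/2 : ℝ) + ε - g (1/2) - d (1/2)) / (1 - g (1/2)) ^ 2 - 1/2 = δ := by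
    have ha : 1 - a ≠ 0 := hg0 ▸ hu (1/2) self_mem_Ici
    rw [hg0, hd0, hδ]
    field_simp
    ring
  have hzero : ∀ t ∈ Ici (1/2 : ℝ), (t + ε - g t - d t) / (1 - g t) - (t + δ) * (1 - g t) = 0 := by
    intro t ht
    have hE := eq_of_hasDerivAt_zero_of_continuousOn_Ici hcont (fun s hs =>
      hasDerivAt_ratio_first_integral (hu s (le_of_lt hs)) (hpos s hs).ne' (hgode s hs)
        (hdode s hs)) ht
    rw [hinit] at hE
    have hut := hu t ht
    field_simp at hE ⊢
    linear_combination hE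
  refine ⟨hzero _ self_mem_Ici, fun t ht => ?_, fun t ht => sub_eq_zero.1 (hzero t ht)⟩
  rw [hzero t (le_of_lt ht), neg_zero, zero_mul, zero_div]
  exact (hasDerivAt_const t 0).congr_of_eventuallyEq <|
    Filter.eventually_of_mem (Ioi_mem_nhds ht) fun s hs => hzero s (mem_Ici_of_Ioi hs)

/-- Let `p ∈ (0,1]`, `ε ≥ 0`, and `(g,d)` a solution of the system
`g' = 2p g(1-g)²/(1-2(t+ε)+g+2d)`, `d' = 2(1-p)g(1-g)+g²` on `(1/2,∞)` starting from
`(a,b) ∈ [0,1)×[0,∞)`.  With `δ = (ε-b-a²/2)/(1-a)²`, the function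
`h(t) = (t+ε-g(t)-d(t))/(1-g(t)) - (t+δ)(1-g(t))` satisfies `h(1/2)=0` and
`h' = -h·g'/(1-g)`, hence `h ≡ 0`: for all `t ≥ 1/2`,
`(t+ε-g(t)-d(t))/(1-g(t)) = (t+δ)(1-g(t))`. -/
theorem ratio_identity (p ε a b : ℝ) (hp : p ∈ Set.Ioc (0:ℝ) 1) (hε : 0 ≤ ε)
    (ha : a ∈ Set.Ico (0:ℝ) 1) (hb : 0 ≤ b)
    (δ : ℝ) (hδ : δ = (ε - b - a ^ 2 / 2) / (1 - a) ^ 2)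
    (g d : ℝ → ℝ)
    (hgmono : StrictMonoOn g (Set.Ici (1/2 : ℝ)))
    (hdmono : StrictMonoOn d (Set.Ici (1/2 : ℝ)))
    (hgmem : ∀ t ∈ Set.Ici (1/2 : ℝ), g t ∈ Set.Ico a 1)
    (hdmem : ∀ t ∈ Set.Ici (1/2 : ℝ), d t ∈ Set.Ici b)
    (hgc : ContinuousOn g (Set.Ici (1/2 : ℝ)))
    (hdc : ContinuousOn d (Set.Ici (1/2 : ℝ)))
    (hg0 : g (1/2) = a) (hd0 : d (1/2) = b)
    (hpos : ∀ t > (1/2 : ℝ), 0 < 1 - 2 * (t + ε) + g t + 2 * d t)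
    (hgode : ∀ t > (1/2 : ℝ),
      HasDerivAt g (2 * p * g t * (1 - g t) ^ 2 / (1 - 2 * (t + ε) + g t + 2 * d t)) t)
    (hdode : ∀ t > (1/2 : ℝ),
      HasDerivAt d (2 * (1 - p) * g t * (1 - g t) + g t ^ 2) t) :
    ((1/2 : ℝ) + ε - g (1/2) - d (1/2)) / (1 - g (1/2)) - ((1/2 : ℝ) + δ) * (1 - g (1/2)) = 0 ∧
    (∀ t > (1/2 : ℝ),
      HasDerivAt (fun s => (s + ε - g s - d s) / (1 - g s) - (s + δ) * (1 - g s))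
        (-((t + ε - g t - d t) / (1 - g t) - (t + δ) * (1 - g t)) *
            (2 * p * g t * (1 - g t) ^ 2 / (1 - 2 * (t + ε) + g t + 2 * d t)) / (1 - g t)) t) ∧
    ∀ t ∈ Set.Ici (1/2 : ℝ),
      (t + ε - g t - d t) / (1 - g t) = (t + δ) * (1 - g t) :=
  ratio_identity_general p ε a b δ hδ g d hgmem hgc hdc hg0 hd0 hpos hgode hdode
end

section
/- Let p ∈ (0,1] and let g_p: [1/2,∞) → [0,1) be the inverse of f_p(s)=(1/2)Σ_{n≥0} s^n/(1+pn). Then for p ≠ 1, (1-p)·∫_0^∞ (1 - g̃_p(t)) dt = (ψ(1/p)+γ)/2, where g̃_p is g_p extended by 0 on [0,1/2], ψ is the digamma function and γ is Euler's constant. -/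
open Real Set MeasureTheory

/-- The digamma function `ψ(x) = Γ'(x)/Γ(x)`, via its classical series representation
`ψ(x) = -γ + Σ_{n≥0} (1/(n+1) - 1/(n+x))`, valid for `x > 0`. -/
noncomputable def digamma (x : ℝ) : ℝ :=
  -Real.eulerMascheroniConstant + ∑' n : ℕ, ((1 : ℝ) / (n + 1) - 1 / (n + x))

/-- For `p ∈ (0,1)`, with `g̃_p` the gel mass function (the inverse of
`f_p(s) = (1/2) Σ_{n≥0} s^n/(1+pn)` on `[1/2,∞)`, extended by `0` on `[0,1/2]`),
`(1-p)·∫_0^∞ (1-g̃_p(t)) dt = (ψ(1/p)+γ)/2`. -/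
theorem integral_one_sub_gel (p : ℝ) (hp : p ∈ Set.Ioo (0:ℝ) 1)
    (f : ℝ → ℝ) (hf : f = fun s : ℝ => (1/2) * ∑' n : ℕ, s ^ n / (1 + p * n))
    (hbij : Set.BijOn f (Set.Ico (0:ℝ) 1) (Set.Ici (1/2 : ℝ)))
    (gp : ℝ → ℝ)
    (hgp0 : ∀ t ≤ (1/2 : ℝ), gp t = 0)
    (hgpmem : ∀ t ∈ Set.Ici (1/2 : ℝ), gp t ∈ Set.Ico (0:ℝ) 1)
    (hgpinv : ∀ t ∈ Set.Ici (1/2 : ℝ), f (gp t) = t) :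
    (1 - p) * ∫ t in Set.Ioi (0:ℝ), (1 - gp t)
      = (digamma (1/p) + Real.eulerMascheroniConstant) / 2 := by
  obtain ⟨hp0, hp1⟩ := hp
  have hden : ∀ n : ℕ, (0:ℝ) < 1 + p * n := fun n => by positivity
  -- summability of the defining series
  have hsumm : ∀ u : ℝ, 0 ≤ u → u < 1 → Summable (fun n : ℕ => u ^ n / (1 + p * n)) := by
    intro u hu0 hu1
    refine Summable.of_nonneg_of_le (fun n => by positivity) (fun n => ?_)
      (summable_geometric_of_lt_one hu0 hu1)
    exact div_le_self (by positivity) (by nlinarith [Nat.cast_nonneg (α := ℝ) n])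
  -- f 0 = 1/2
  have hf0 : f 0 = 1/2 := by
    rw [hf]
    simp only
    rw [tsum_eq_single 0 (by intro n hn; simp [zero_pow hn])]
    norm_num
  -- strict monotonicity of f on [0,1)
  have hfs : StrictMonoOn f (Ico (0:ℝ) 1) := by
    rintro s ⟨hs0, hs1⟩ t ⟨ht0, ht1⟩ hst
    rw [hf]
    simp only
    have hlt : ∑' n : ℕ, s ^ n / (1 + p * n) < ∑' n : ℕ, t ^ n / (1 + p * n) := by
      refine Summable.tsum_lt_tsum_of_nonneg (fun n => by positivity)
        (fun n => by gcongr) (i := 1) ?_ (hsumm t ht0 ht1)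
      have : (0:ℝ) < 1 + p * (1:ℕ) := hden 1
      rw [div_lt_div_iff_of_pos_right this]
      simpa using hst
    linarith
  -- pointwise bounds for gp
  have hgpnn : ∀ t : ℝ, 0 ≤ gp t := by
    intro t
    rcases le_or_gt t (1/2) with h | h
    · rw [hgp0 t h]
    · exact (hgpmem t h.le).1
  have hgplt1 : ∀ t : ℝ, gp t < 1 := by
    intro t
    rcases le_or_gt t (1/2) with h | h
    · rw [hgp0 t h]; norm_num
    · exact (hgpmem t h.le).2
  -- monotonicity and measurability of gp
  have hmono : Monotone gp := by
    intro t₁ t₂ h12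
    rcases le_or_gt t₂ (1/2) with h | h
    · rw [hgp0 t₂ h, hgp0 t₁ (h12.trans h)]
    · rcases le_or_gt t₁ (1/2) with h' | h'
      · rw [hgp0 t₁ h']; exact hgpnn t₂
      · by_contra hc
        push_neg at hc
        have := hfs (hgpmem t₂ h.le) (hgpmem t₁ h'.le) hc
        rw [hgpinv t₁ h'.le, hgpinv t₂ h.le] at this
        linarith
  have hmeas : Measurable gp := hmono.measurable
  -- the summands of the final series
  set a : ℕ → ℝ := fun n => 1 / (2 * (1 + p * n) * (n + 1)) with ha
  have hanns : ∀ n, 0 ≤ a n := fun n => by rw [ha]; positivity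
  have hSa : Summable a := by
    have h2 : Summable (fun n : ℕ => (1:ℝ) / ((n:ℝ) + 1) ^ 2) := by
      have h := summable_one_div_nat_pow.mpr (by norm_num : 1 < 2)
      have h' := (summable_nat_add_iff 1).mpr h
      refine h'.congr fun n => ?_
      push_cast
      ring
    refine Summable.of_nonneg_of_le hanns (fun n => ?_) (h2.mul_left (1/(2*p)))
    have hn : (0:ℝ) ≤ (n:ℝ) := Nat.cast_nonneg n
    have key : 2 * p * ((n:ℝ)+1)^2 ≤ 2 * (1 + p * n) * (n + 1) := by nlinarith
    rw [ha]
    have h1 : (1:ℝ)/(2*p) * (1/((n:ℝ)+1)^2) = 1 / (2*p*((n:ℝ)+1)^2) := by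
      field_simp
    rw [h1]
    exact one_div_le_one_div_of_le (by positivity) key
  set S : ℝ := ∑' n, a n with hSdef
  have hSnn : 0 ≤ S := tsum_nonneg hanns
  -- the layer-cake computation
  have key : ∫⁻ t, ENNReal.ofReal (1 - gp t) ∂(volume.restrict (Ioi (0:ℝ)))
      = ENNReal.ofReal S := by
    rw [lintegral_eq_lintegral_meas_lt _ (f := fun t => 1 - gp t) (ae_of_all _ fun t => by
      simp only [Pi.zero_apply]; linarith [hgplt1 t])
      ((measurable_const.sub hmeas).aemeasurable)]
    have hsetm : ∀ s : ℝ, MeasurableSet {a : ℝ | s < 1 - gp a} :=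
      fun s => measurableSet_lt measurable_const (measurable_const.sub hmeas)
    have hset : ∀ s ∈ Ioi (0:ℝ),
        (volume.restrict (Ioi (0:ℝ))) {a : ℝ | s < 1 - gp a}
          = (Ioo (0:ℝ) 1).indicator (fun s => ENNReal.ofReal (f (1-s))) s := by
      intro s hs
      rw [Measure.restrict_apply (hsetm s)]
      by_cases hs1 : s < 1
      · have h1s : (1:ℝ) - s ∈ Ico (0:ℝ) 1 := ⟨by linarith [mem_Ioi.mp hs], by
          simp only [mem_Ioi] at hs; linarith⟩
        have hfhalf : 1/2 < f (1 - s) := by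
          have h0m : (0:ℝ) ∈ Ico (0:ℝ) 1 := by constructor <;> norm_num
          have := hfs h0m h1s (by simp only [mem_Ioi] at hs; linarith)
          rwa [hf0] at this
        have hEq : {a : ℝ | s < 1 - gp a} ∩ Ioi 0 = Ioo 0 (f (1 - s)) := by
          ext t
          simp only [mem_inter_iff, mem_setOf_eq, mem_Ioi, mem_Ioo]
          constructor
          · rintro ⟨h1, h2⟩
            refine ⟨h2, ?_⟩
            rcases le_or_gt t (1/2) with ht | ht
            · linarith
            · have h := hfs (hgpmem t ht.le) h1s (by linarith)
              rwa [hgpinv t ht.le] at h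
          · rintro ⟨h2, hlt⟩
            refine ⟨?_, h2⟩
            rcases le_or_gt t (1/2) with ht | ht
            · rw [hgp0 t ht]; simp only [mem_Ioi] at hs; linarith
            · by_contra hc
              push_neg at hc
              have h := hfs.monotoneOn h1s (hgpmem t ht.le) (by linarith)
              rw [hgpinv t ht.le] at h
              linarith
        have hsmem : s ∈ Ioo (0:ℝ) 1 := ⟨mem_Ioi.mp hs, hs1⟩
        rw [hEq, Set.indicator_of_mem hsmem, Real.volume_Ioo, sub_zero]
      · push_neg at hs1
        have hEq : {a : ℝ | s < 1 - gp a} ∩ Ioi 0 = (∅ : Set ℝ) := by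
          ext t
          simp only [mem_inter_iff, mem_setOf_eq, mem_Ioi, mem_empty_iff_false,
            iff_false, not_and]
          intro h1
          linarith [hgpnn t]
        rw [hEq, measure_empty, indicator_of_notMem (by
          simp only [mem_Ioo, not_and, not_lt]
          intro _; exact hs1)]
    rw [setLIntegral_congr_fun measurableSet_Ioi hset,
      lintegral_indicator measurableSet_Ioo,
      Measure.restrict_restrict measurableSet_Ioo,
      inter_eq_left.mpr Ioo_subset_Ioi_self]
    -- expand f (1-s) as a series and integrate term by term
    have hterm : ∀ s ∈ Ioo (0:ℝ) 1, ENNReal.ofReal (f (1-s))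
        = ∑' n : ℕ, ENNReal.ofReal ((1-s)^n / (2 * (1 + p * n))) := by
      intro s hs
      obtain ⟨hs0, hs1⟩ := hs
      have h10 : (0:ℝ) ≤ 1 - s := by linarith
      have h11 : (1:ℝ) - s < 1 := by linarith
      have hsum2 : Summable (fun n : ℕ => (1-s)^n / (2 * (1 + p * n))) := by
        refine ((hsumm (1-s) h10 h11).mul_left (1/2)).congr fun n => ?_
        field_simp
      have h1 : f (1-s) = ∑' n : ℕ, (1-s)^n / (2 * (1 + p * n)) := by
        rw [hf]
        simp only
        rw [← tsum_mul_left]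
        exact tsum_congr fun n => by field_simp
      rw [h1, ENNReal.ofReal_tsum_of_nonneg (fun n => by positivity) hsum2]
    rw [setLIntegral_congr_fun measurableSet_Ioo hterm,
      lintegral_tsum (fun n => (Measurable.ennreal_ofReal (by fun_prop)).aemeasurable)]
    have hterm2 : ∀ n : ℕ, ∫⁻ s in Ioo (0:ℝ) 1,
        ENNReal.ofReal ((1-s)^n / (2 * (1 + p * n))) = ENNReal.ofReal (a n) := by
      intro n
      have hInt : IntegrableOn (fun s : ℝ => (1-s)^n / (2 * (1 + p * n))) (Ioo 0 1) := by
        exact (Continuous.integrableOn_Icc (by fun_prop)).mono_set Ioo_subset_Icc_self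
      rw [← ofReal_integral_eq_lintegral_ofReal hInt
        ((ae_restrict_iff' measurableSet_Ioo).2 (ae_of_all _ fun s hs => by
          simp only [Pi.zero_apply]
          have : (0:ℝ) ≤ 1 - s := by linarith [hs.2]
          positivity))]
      congr 1
      rw [MeasureTheory.integral_div]
      have hint : ∫ s in Ioo (0:ℝ) 1, (1-s)^n = 1/(n+1) := by
        rw [← integral_Ioc_eq_integral_Ioo,
          ← intervalIntegral.integral_of_le (by norm_num : (0:ℝ) ≤ 1)]
        have := intervalIntegral.integral_comp_sub_left (a := (0:ℝ)) (b := 1)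
          (fun x : ℝ => x ^ n) 1
        simp only [sub_zero, sub_self] at this
        rw [this, integral_pow]
        norm_num
      rw [hint, ha]
      have h1 : (0:ℝ) < 1 + p * n := hden n
      have h2 : (0:ℝ) < (n:ℝ) + 1 := by positivity
      field_simp
    rw [tsum_congr hterm2, ← ENNReal.ofReal_tsum_of_nonneg hanns hSa]
  -- evaluate the integral
  have hI : ∫ t in Ioi (0:ℝ), (1 - gp t) = S := by
    rw [integral_eq_lintegral_of_nonneg_ae (f := fun t => 1 - gp t) (ae_of_all _ fun t => by
      simp only [Pi.zero_apply]; linarith [hgplt1 t])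
      ((measurable_const.sub hmeas).aestronglyMeasurable), key, ENNReal.toReal_ofReal hSnn]
  rw [hI]
  -- final series identity
  have hrhs : (digamma (1/p) + Real.eulerMascheroniConstant) / 2
      = ∑' n : ℕ, ((1:ℝ) / (n + 1) - 1 / ((n:ℝ) + 1/p)) / 2 := by
    rw [digamma, tsum_div_const]
    ring
  rw [hrhs, hSdef, ← tsum_mul_left]
  refine tsum_congr fun n => ?_
  have h1 : (0:ℝ) < (n:ℝ) + 1 := by positivity
  have h2 : (0:ℝ) < (n:ℝ) + 1/p := by positivity
  have h3 : (0:ℝ) < 1 + p * n := hden n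
  rw [ha]
  field_simp
  ring
end

section
/- For p ∈ (0,1], consider the functions t_{p,k}(t) = (k^{k-2}/k!)·(2t)^{k-1}·(1-g_p(t))^k·exp(-2kt(1-g_p(t))) for k ≥ 1, where g_p is the gel mass function (the inverse of f_p on [1/2,∞), extended by 0 on [0,1/2]). Then for every t ≥ 0 and every k ≥ 2: t_{p,k}'(t) = Σ_{i+j=k, i,j≥1} i·j·t_{p,i}(t)·t_{p,j}(t) - 2k·t_{p,k}(t)·(1 - (1-p)·g_p(t)), and t_{p,1}'(t) = -2·t_{p,1}(t)·(1-(1-p)g_p(t)), with t_{p,1}(0)=1 and t_{p,k}(0)=0 for k ≥ 2. -/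
/-!
With `u = (1 - g) e^{-2t(1-g)}`, the gel equation for `g` is exactly `u' = -2 (1 - (1 - p) g) u`.
Since `t_{p,k} = c_k (2t)^{k-1} u^k` with `c_k = k^{k-2} / k!`, differentiating gives the loss term
`-2k t_{p,k} (1 - (1 - p) g)` plus `2(k-1) c_k (2t)^{k-2} u^k`, and the gain term
`∑ i j t_{p,i} t_{p,j}` equals the latter by the tree identity
`∑_{i+j=k} C(k,i) i^{i-1} j^{j-1} = 2(k-1) k^{k-2}`. That identity follows from Abel's identity
`∑_{i+j=n} (i+1)^i/(i+1)! (y+j)^j/j! = (y+n+1)^n/n!` at `y = 0`, after weighting every term by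
`(i + 1) + (j + 1)` and using the symmetry `i ↔ j`.
-/

open Real Finset Filter Topology
open scoped Nat

noncomputable def cayleyCoeff (k : ℕ) : ℝ := (k : ℝ) ^ ((k : ℤ) - 2) / k !

/-- The number `(n + 1) ^ n` of rooted labelled trees on `n + 1` vertices, divided by `(n + 1)!`. -/
noncomputable def rootedTreeCoeff (n : ℕ) : ℝ := ((n : ℝ) + 1) ^ n / (n + 1)!

theorem natCast_succ_mul_cayleyCoeff_succ (n : ℕ) :
    ((n + 1 : ℕ) : ℝ) * cayleyCoeff (n + 1) = rootedTreeCoeff n := by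
  rw [cayleyCoeff, rootedTreeCoeff, ← mul_div_assoc, ← zpow_one_add₀ (by positivity),
    show 1 + (((n + 1 : ℕ) : ℤ) - 2) = n by push_cast; ring, zpow_natCast]
  push_cast
  rfl

theorem cayleyCoeff_add_two (n : ℕ) : cayleyCoeff (n + 2) = ((n : ℝ) + 2) ^ n / (n + 2)! := by
  rw [cayleyCoeff, show ((n + 2 : ℕ) : ℤ) - 2 = n by push_cast; ring, zpow_natCast]
  push_cast
  rfl

theorem sum_antidiagonal_neg_one_pow_mul_pow_div_factorial_eq_zero {m N : ℕ} (h : m < N) :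
    ∑ x ∈ antidiagonal N, (-1 : ℝ) ^ x.2 * (x.1 : ℝ) ^ m / (x.1 ! * x.2 !) = 0 := by
  have hΔ := fwdDiff_iter_eq_sum_shift (1 : ℝ) (fun r : ℝ ↦ r ^ m) N 0
  rw [fwdDiff_iter_pow_eq_zero_of_lt h] at hΔ
  simp only [Pi.zero_apply, zero_add, nsmul_eq_mul, mul_one, zsmul_eq_mul] at hΔ
  rw [Nat.sum_antidiagonal_eq_sum_range_succ (fun i j ↦ (-1 : ℝ) ^ j * (i : ℝ) ^ m / (i ! * j !)),
    ← mul_left_inj' (show (N ! : ℝ) ≠ 0 by positivity), zero_mul, sum_mul, hΔ]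
  refine sum_congr rfl fun i hi ↦ ?_
  have hi : i ≤ N := Nat.lt_succ_iff.mp (mem_range.mp hi)
  push_cast [Nat.cast_choose ℝ hi]
  field_simp

theorem hasDerivAt_add_pow_succ_div_factorial (c : ℝ) (j : ℕ) (y : ℝ) :
    HasDerivAt (fun y ↦ (y + c) ^ (j + 1) / (j + 1)!) ((y + c) ^ j / j !) y := by
  refine ((((hasDerivAt_id y).add_const c).fun_pow (j + 1)).div_const ((j + 1)! : ℝ)).congr_deriv ?_
  push_cast [Nat.factorial_succ]
  field_simp
  simp

theorem hasDerivAt_sum_antidiagonal_abel (n : ℕ) (y : ℝ) :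
    HasDerivAt
      (fun y ↦ ∑ x ∈ antidiagonal (n + 1), rootedTreeCoeff x.1 * ((y + x.2) ^ x.2 / x.2 !))
      (∑ x ∈ antidiagonal n, rootedTreeCoeff x.1 * ((y + 1 + x.2) ^ x.2 / x.2 !)) y := by
  simp only [Nat.sum_antidiagonal_succ', pow_zero, Nat.factorial_zero, Nat.cast_one, div_one]
  refine ((hasDerivAt_const _ _).fun_add (HasDerivAt.fun_sum fun (x : ℕ × ℕ) _ ↦
    (hasDerivAt_add_pow_succ_div_factorial ((x.2 + 1 : ℕ) : ℝ) x.2 y).const_mul _)).congr_deriv ?_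
  simp [add_assoc, add_comm (1 : ℝ)]

theorem sum_antidiagonal_abel_neg_eq_zero (n : ℕ) :
    ∑ x ∈ antidiagonal (n + 1), rootedTreeCoeff x.1 * ((-(n + 2 : ℝ) + x.2) ^ x.2 / x.2 !) = 0 := by
  have hterm : ∀ x ∈ antidiagonal (n + 1),
      rootedTreeCoeff x.1 * ((-(n + 2 : ℝ) + x.2) ^ x.2 / x.2 !) =
        (-1) ^ x.2 * ((x.1 + 1 : ℕ) : ℝ) ^ (n + 1) / ((x.1 + 1)! * x.2 !) := by
    intro x hx
    rw [HasAntidiagonal.mem_antidiagonal] at hx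
    have hx' : -(n + 2 : ℝ) + x.2 = -1 * (x.1 + 1) := by
      linarith [show (x.1 : ℝ) + x.2 = n + 1 by exact_mod_cast hx]
    rw [hx', ← hx, mul_pow, pow_add, rootedTreeCoeff]
    push_cast
    field_simp
  have hsum := sum_antidiagonal_neg_one_pow_mul_pow_div_factorial_eq_zero
    (show n + 1 < n + 2 by omega)
  rw [Nat.sum_antidiagonal_succ] at hsum
  rw [sum_congr rfl hterm]
  simpa using hsum

theorem sum_antidiagonal_abel (n : ℕ) (y : ℝ) :
    ∑ x ∈ antidiagonal n, rootedTreeCoeff x.1 * ((y + x.2) ^ x.2 / x.2 !) =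
      (y + n + 1) ^ n / n ! := by
  induction n generalizing y with
  | zero => simp [rootedTreeCoeff]
  | succ n ih =>
    -- Both sides have the same `y`-derivative by the case `n`, and both vanish at `y = -(n + 2)`.
    set F : ℝ → ℝ := fun y ↦ ∑ x ∈ antidiagonal (n + 1),
      rootedTreeCoeff x.1 * ((y + x.2) ^ x.2 / x.2 !) - (y + (n + 2)) ^ (n + 1) / (n + 1)!
    have hF : ∀ y, HasDerivAt F 0 y := fun y ↦
      ((hasDerivAt_sum_antidiagonal_abel n y).sub
        (hasDerivAt_add_pow_succ_div_factorial _ n y)).congr_deriv (by rw [ih]; ring_nf)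
    have hF₀ : F (-(n + 2)) = 0 := by
      simp only [F]
      rw [sum_antidiagonal_abel_neg_eq_zero]
      simp
    have hFy := (is_const_of_deriv_eq_zero (fun z ↦ (hF z).differentiableAt)
      (fun z ↦ (hF z).deriv) y (-(n + 2))).trans hF₀
    simp only [F, sub_eq_zero] at hFy
    rw [hFy]
    push_cast
    ring_nf

theorem sum_antidiagonal_rootedTreeCoeff_mul (n : ℕ) :
    ∑ x ∈ antidiagonal n, rootedTreeCoeff x.1 * rootedTreeCoeff x.2 =
      2 * (n + 1) * cayleyCoeff (n + 2) := by
  set r := rootedTreeCoeff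
  have habel : ∑ x ∈ antidiagonal n, r x.1 * ((x.2 + 1) * r x.2) =
      (n + 2) ^ (n + 1) / (n + 1)! - r (n + 1) := by
    have := sum_antidiagonal_abel (n + 1) 0
    simp only [Nat.sum_antidiagonal_succ', zero_add, pow_zero, Nat.factorial_zero, Nat.cast_one,
      div_one, mul_one] at this
    have hsucc : ∀ j : ℕ, ((j : ℝ) + 1) * r j = ((j : ℝ) + 1) ^ (j + 1) / (j + 1)! :=
      fun j ↦ by simp only [r, rootedTreeCoeff, pow_succ]; ring
    simp only [hsucc]
    push_cast at this ⊢
    linear_combination this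
  have hsym : (n + 2) * ∑ x ∈ antidiagonal n, r x.1 * r x.2 =
      2 * ∑ x ∈ antidiagonal n, r x.1 * ((x.2 + 1) * r x.2) := by
    calc (n + 2) * ∑ x ∈ antidiagonal n, r x.1 * r x.2
        = ∑ x ∈ antidiagonal n, ((x.1 + 1) * r x.1 * r x.2 + r x.1 * ((x.2 + 1) * r x.2)) := by
          rw [mul_sum]
          refine sum_congr rfl fun x hx ↦ ?_
          have : (x.1 : ℝ) + x.2 = n := by exact_mod_cast HasAntidiagonal.mem_antidiagonal.mp hx
          linear_combination -(r x.1 * r x.2) * this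
      _ = 2 * ∑ x ∈ antidiagonal n, r x.1 * ((x.2 + 1) * r x.2) := by
          rw [sum_add_distrib, two_mul, ← Nat.sum_antidiagonal_swap]
          simp only [Prod.fst_swap, Prod.snd_swap]
          exact congrArg (· + _) (sum_congr rfl fun x _ ↦ by ring)
  rw [habel] at hsym
  refine mul_left_cancel₀ (show (n : ℝ) + 2 ≠ 0 by positivity) (hsym.trans ?_)
  simp only [r, rootedTreeCoeff, cayleyCoeff_add_two]
  push_cast [Nat.factorial_succ]
  field_simp
  ring

theorem sum_Icc_mul_cayleyCoeff {k : ℕ} (hk : 2 ≤ k) :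
    ∑ i ∈ Icc 1 (k - 1), (i : ℝ) * cayleyCoeff i * (((k - i : ℕ) : ℝ) * cayleyCoeff (k - i)) =
      2 * ((k - 1 : ℕ) : ℝ) * cayleyCoeff k := by
  obtain ⟨n, rfl⟩ := Nat.exists_eq_add_of_le' hk
  rw [show n + 2 - 1 = n + 1 by omega, Nat.cast_succ, ← sum_antidiagonal_rootedTreeCoeff_mul,
    Nat.sum_antidiagonal_eq_sum_range_succ (fun i j ↦ rootedTreeCoeff i * rootedTreeCoeff j),
    range_eq_Ico, ← sum_Ico_add_right_sub_eq (c := 1)]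
  refine sum_congr (by ext; simp) fun i hi ↦ ?_
  rw [mem_Ico] at hi
  obtain ⟨i, rfl⟩ := Nat.exists_eq_add_of_le' hi.1
  rw [show n + 2 - (i + 1) = (n - i) + 1 by omega, natCast_succ_mul_cayleyCoeff_succ,
    natCast_succ_mul_cayleyCoeff_succ]
  simp

theorem sum_Icc_mul_cayleyCoeff_mul_pow {k : ℕ} (hk : 2 ≤ k) (x v : ℝ) :
    ∑ i ∈ Icc 1 (k - 1), (i : ℝ) * ((k - i : ℕ) : ℝ) * (cayleyCoeff i * x ^ (i - 1) * v ^ i) *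
      (cayleyCoeff (k - i) * x ^ (k - i - 1) * v ^ (k - i)) =
      2 * ((k - 1 : ℕ) : ℝ) * cayleyCoeff k * x ^ (k - 2) * v ^ k := by
  have hterm : ∀ i ∈ Icc 1 (k - 1), (i : ℝ) * ((k - i : ℕ) : ℝ) *
      (cayleyCoeff i * x ^ (i - 1) * v ^ i) *
      (cayleyCoeff (k - i) * x ^ (k - i - 1) * v ^ (k - i)) =
      i * cayleyCoeff i * ((k - i : ℕ) * cayleyCoeff (k - i)) * (x ^ (k - 2) * v ^ k) := by
    intro i hi
    rw [mem_Icc] at hi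
    rw [show k - 2 = (i - 1) + (k - i - 1) by omega, pow_add,
      ← pow_mul_pow_sub v (show i ≤ k by omega)]
    ring
  rw [sum_congr rfl hterm, ← sum_mul, sum_Icc_mul_cayleyCoeff hk]
  ring

/- If `h = 1 - 2t(1 - g)` vanished at `t₀`, the junk value `x / 0 = 0` in the equation would give
`h'(t₀) = -2(1 - g(t₀)) < 0`, so `h > 0` just left of `t₀`; but there
`(h²)' = -4h(1 - g) + 8ptg(1 - g) > 0`, which is incompatible with `h(t₀)² = 0`. -/
theorem one_sub_two_mul_one_sub_ne_zero {p : ℝ} (hp : 0 < p) {g : ℝ → ℝ} (hgc : Continuous g)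
    (hode : ∀ t > (1 / 2 : ℝ),
      HasDerivAt g (2 * p * g t * (1 - g t) / (1 - 2 * t * (1 - g t))) t)
    {t₀ : ℝ} (ht₀ : 1 / 2 < t₀) : 1 - 2 * t₀ * (1 - g t₀) ≠ 0 := by
  set h : ℝ → ℝ := fun t ↦ 1 - 2 * t * (1 - g t)
  intro hzero
  change h t₀ = 0 at hzero
  have hh : ∀ t > (1 / 2 : ℝ),
      HasDerivAt h (-(2 * (1 - g t)) + 2 * t * (2 * p * g t * (1 - g t) / h t)) t := fun t ht ↦
    ((((hasDerivAt_id t).const_mul 2).mul ((hasDerivAt_const t 1).sub (hode t ht))).const_sub 1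
      ).congr_deriv (by simp only [h, id, Pi.sub_apply]; ring)
  have hg₀ : 0 < g t₀ ∧ g t₀ < 1 := by
    simp only [h] at hzero
    constructor <;> nlinarith
  have hleft : ∀ᶠ t in 𝓝[<] t₀, 0 < h t := by
    have hneg : -(2 * (1 - g t₀)) + 2 * t₀ * (2 * p * g t₀ * (1 - g t₀) / h t₀) < 0 := by
      rw [hzero, div_zero]
      linarith
    filter_upwards [(hh t₀ ht₀).hasDerivWithinAt.limsup_slope_le' (lt_irrefl t₀) hneg,
      self_mem_nhdsWithin] with t hslope ht
    rw [slope_def_field, hzero, sub_zero] at hslope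
    exact ((div_neg_iff.mp hslope).resolve_right fun h' ↦ lt_asymm h'.2 (sub_neg.mpr ht)).1
  set ψ : ℝ → ℝ := fun t ↦ -4 * h t * (1 - g t) + 8 * p * t * g t * (1 - g t)
  have hψ : ∀ᶠ t in 𝓝 t₀, 0 < ψ t := by
    have hψ₀ : 0 < ψ t₀ := by
      simp only [ψ, hzero]
      have := mul_pos (mul_pos hp hg₀.1) (sub_pos.mpr hg₀.2)
      nlinarith
    exact (show Continuous ψ by fun_prop).continuousAt.eventually_const_lt hψ₀
  obtain ⟨l, hl, hsub⟩ := mem_nhdsLT_iff_exists_Ioo_subset.mp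
    (hleft.and (nhdsWithin_le_nhds (hψ.and (eventually_gt_nhds ht₀))))
  obtain ⟨c, hc, hslope⟩ := exists_hasDerivAt_eq_slope (fun t ↦ h t ^ 2) ψ hl
    (by fun_prop) fun c hc ↦ by
      obtain ⟨hhc, -, hc2⟩ := hsub hc
      refine ((hh c hc2).pow 2).congr_deriv ?_
      field_simp
      simp only [ψ]
      ring
  obtain ⟨-, hψc, -⟩ := hsub hc
  have hslope_nonpos : (h t₀ ^ 2 - h l ^ 2) / (t₀ - l) ≤ 0 := by
    rw [hzero]
    exact div_nonpos_of_nonpos_of_nonneg (by nlinarith [sq_nonneg (h l)]) (sub_nonneg.mpr hl.le)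
  linarith

theorem hasDerivAt_one_sub_mul_exp {p : ℝ} {g : ℝ → ℝ} {G t : ℝ} (hg : HasDerivAt g G t)
    (hG : G * (1 - 2 * t * (1 - g t)) = 2 * p * g t * (1 - g t)) :
    HasDerivAt (fun s ↦ (1 - g s) * exp (-(2 * s * (1 - g s))))
      (-(2 * (1 - (1 - p) * g t)) * ((1 - g t) * exp (-(2 * t * (1 - g t))))) t := by
  have hsub := (hasDerivAt_const t (1 : ℝ)).sub hg
  refine (hsub.mul (((hasDerivAt_id t).const_mul 2).mul hsub).neg.exp).congr_deriv ?_
  simp only [id, Pi.mul_apply, Pi.sub_apply, Pi.neg_apply]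
  linear_combination -exp (-(2 * t * (1 - g t))) * hG

theorem hasDerivAt_one_sub_mul_exp_of_gel {p : ℝ} (hp : 0 < p) {g : ℝ → ℝ}
    (hg0 : ∀ t ≤ (1 / 2 : ℝ), g t = 0) (hgc : Continuous g)
    (hode : ∀ t > (1 / 2 : ℝ),
      HasDerivAt g (2 * p * g t * (1 - g t) / (1 - 2 * t * (1 - g t))) t) (t : ℝ) :
    HasDerivAt (fun s ↦ (1 - g s) * exp (-(2 * s * (1 - g s))))
      (-(2 * (1 - (1 - p) * g t)) * ((1 - g t) * exp (-(2 * t * (1 - g t))))) t := by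
  refine hasDerivAt_of_hasDerivAt_of_ne' (x := 1 / 2)
    (g := fun t ↦ -(2 * (1 - (1 - p) * g t)) * ((1 - g t) * exp (-(2 * t * (1 - g t)))))
    (fun s hs ↦ ?_) (by fun_prop) (by fun_prop) t
  rcases hs.lt_or_gt with hs | hs
  · have hg : HasDerivAt g 0 s := (hasDerivAt_const s 0).congr_of_eventuallyEq <|
      (eventually_lt_nhds hs).mono fun r hr ↦ hg0 r hr.le
    exact hasDerivAt_one_sub_mul_exp hg (by rw [hg0 s hs.le]; ring)
  · exact hasDerivAt_one_sub_mul_exp (hode s hs)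
      (div_mul_cancel₀ _ (one_sub_two_mul_one_sub_ne_zero hp hgc hode hs))

theorem hasDerivAt_mul_two_mul_pow_mul_pow {u : ℝ → ℝ} {a t : ℝ} (hu : HasDerivAt u (a * u t) t)
    (c : ℝ) (k : ℕ) :
    HasDerivAt (fun s ↦ c * (2 * s) ^ (k - 1) * u s ^ k)
      (2 * ((k - 1 : ℕ) : ℝ) * c * (2 * t) ^ (k - 2) * u t ^ k +
        k * a * (c * (2 * t) ^ (k - 1) * u t ^ k)) t := by
  refine (((((hasDerivAt_id t).const_mul 2).fun_pow (k - 1)).const_mul c).mul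
    (hu.fun_pow k)).congr_deriv ?_
  rcases k with _ | k
  · simp
  · simp only [id, add_tsub_cancel_right, pow_succ]
    push_cast
    ring

theorem tree_functions_ODE_general (p : ℝ) (hp : p ∈ Set.Ioc (0:ℝ) 1)
    (gp : ℝ → ℝ)
    (hgp0 : ∀ t ≤ (1/2 : ℝ), gp t = 0)
    (hgpc : Continuous gp)
    (hgpode : ∀ t > (1/2 : ℝ),
      HasDerivAt gp (2 * p * gp t * (1 - gp t) / (1 - 2 * t * (1 - gp t))) t)
    (tk : ℕ → ℝ → ℝ)
    (htk : tk = fun (k : ℕ) (t : ℝ) => ((k : ℝ) ^ ((k : ℤ) - 2) / (Nat.factorial k : ℝ)) *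
      (2 * t) ^ (k - 1) * (1 - gp t) ^ k * Real.exp (-(2 * k * t * (1 - gp t)))) :
    tk 1 0 = 1 ∧ (∀ k ≥ 2, tk k 0 = 0) ∧
    (∀ t ≥ (0:ℝ), HasDerivAt (tk 1) (-(2 * tk 1 t * (1 - (1 - p) * gp t))) t) ∧
    (∀ k ≥ 2, ∀ t ≥ (0:ℝ),
      HasDerivAt (tk k)
        ((∑ i ∈ Finset.Icc 1 (k - 1), (i : ℝ) * ((k - i : ℕ) : ℝ) * tk i t * tk (k - i) t)
          - 2 * k * tk k t * (1 - (1 - p) * gp t)) t) := by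
  set u : ℝ → ℝ := fun s ↦ (1 - gp s) * exp (-(2 * s * (1 - gp s)))
  obtain rfl : tk = fun k t ↦ cayleyCoeff k * (2 * t) ^ (k - 1) * u t ^ k := by
    rw [htk]
    funext k t
    simp only [u, cayleyCoeff, mul_pow, ← Real.exp_nat_mul]
    ring_nf
  have hderiv := fun k t ↦ hasDerivAt_mul_two_mul_pow_mul_pow
    (hasDerivAt_one_sub_mul_exp_of_gel hp.1 hgp0 hgpc hgpode t) (cayleyCoeff k) k
  refine ⟨?_, fun k hk ↦ ?_, fun t _ ↦ ?_, fun k hk t _ ↦ ?_⟩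
  · simp [cayleyCoeff, u, hgp0 0 (by norm_num)]
  · simp [zero_pow (by omega : k - 1 ≠ 0)]
  · convert hderiv 1 t using 1
    simp only [tsub_self, Nat.cast_zero, Nat.cast_one]
    ring
  · convert hderiv k t using 1
    rw [sum_Icc_mul_cayleyCoeff_mul_pow hk]
    ring

/-- For `p ∈ (0,1]`, with `g_p` the gel mass function (zero on `(-∞,1/2]`,
valued in `[0,1)`, continuous, satisfying the ODE
`g_p' = 2p g_p(1-g_p)/(1-2t(1-g_p))` on `(1/2,∞)`), the functions
`t_{p,k}(t) = (k^{k-2}/k!)(2t)^{k-1}(1-g_p(t))^k e^{-2kt(1-g_p(t))}` satisfy: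
`t_{p,1}(0)=1`, `t_{p,k}(0)=0` for `k ≥ 2`,
`t_{p,1}' = -2 t_{p,1} (1-(1-p)g_p)` on `[0,∞)`, and for `k ≥ 2`,
`t_{p,k}' = Σ_{i+j=k} i j t_{p,i} t_{p,j} - 2k t_{p,k}(1-(1-p)g_p)` on `[0,∞)`. -/
theorem tree_functions_ODE (p : ℝ) (hp : p ∈ Set.Ioc (0:ℝ) 1)
    (gp : ℝ → ℝ)
    (hgp0 : ∀ t ≤ (1/2 : ℝ), gp t = 0)
    (hgpmem : ∀ t : ℝ, gp t ∈ Set.Ico (0:ℝ) 1)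
    (hgpc : Continuous gp)
    (hgpode : ∀ t > (1/2 : ℝ),
      HasDerivAt gp (2 * p * gp t * (1 - gp t) / (1 - 2 * t * (1 - gp t))) t)
    (tk : ℕ → ℝ → ℝ)
    (htk : tk = fun (k : ℕ) (t : ℝ) => ((k : ℝ) ^ ((k : ℤ) - 2) / (Nat.factorial k : ℝ)) *
      (2 * t) ^ (k - 1) * (1 - gp t) ^ k * Real.exp (-(2 * k * t * (1 - gp t)))) :
    tk 1 0 = 1 ∧ (∀ k ≥ 2, tk k 0 = 0) ∧
    (∀ t ≥ (0:ℝ), HasDerivAt (tk 1) (-(2 * tk 1 t * (1 - (1 - p) * gp t))) t) ∧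
    (∀ k ≥ 2, ∀ t ≥ (0:ℝ),
      HasDerivAt (tk k)
        ((∑ i ∈ Finset.Icc 1 (k - 1), (i : ℝ) * ((k - i : ℕ) : ℝ) * tk i t * tk (k - i) t)
          - 2 * k * tk k t * (1 - (1 - p) * gp t)) t) :=
  tree_functions_ODE_general p hp gp hgp0 hgpc hgpode tk htk
end

section
/- For every integer k ≥ 2, the combinatorial identity 2·k^{k-3}/(k-2)! = Σ_{i=1}^{k-1} (i^{i-2}/(i-1)!)·((k-i)^{k-i-2}/(k-i-1)!) holds. -/
/-!
Put `k = n + 2` and `i = j + 1`, and let `A_m(x) = x (x + m)^(m-1)` (with `A_0 = 1`) be the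
Abel polynomials. The summand is `C(n,j) A_j(1) A_{n-j}(1) / n!` and the left side is
`A_n(2) / n!`, so the identity is the case `x = y = 1` of the binomial-type law
`A_n(x + y) = ∑ C(n,j) A_j(x) A_{n-j}(y)`.

Writing `A_m(y) = (y + m)^m - m (y + m)^(m-1)`, this law reduces to Abel's identity
`∑ C(n,j) A_j(x) (y + n - j)^(n-j) = (x + y + n)^n`, applied at `(n, y)` and `(n - 1, y + 1)`.
Abel's identity follows by induction on `n`: as functions of `y` both sides have derivative
`n` times the previous instance at `y + 1`, and both vanish at `y = -x - n`, where the left side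
is `x` times the `n`-th finite difference of `t ↦ t^(n-1)` at `x`.
-/

open Finset

noncomputable def abelPoly (x : ℝ) : ℕ → ℝ
  | 0 => 1
  | n + 1 => x * (x + (n + 1 : ℕ)) ^ n

lemma abelPoly_eq_mul_zpow {x : ℝ} {n : ℕ} (h : x + n ≠ 0) :
    abelPoly x n = x * (x + n) ^ ((n : ℤ) - 1) := by
  cases n with
  | zero => simp_all [abelPoly]
  | succ m => simp [abelPoly, ← zpow_natCast]

lemma abelPoly_mul_pow (x : ℝ) {k n : ℕ} (hk : k ≤ n + 1) :
    abelPoly x k * (x + k) ^ (n + 1 - k) = x * (x + k) ^ n := by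
  cases k with
  | zero => simp [abelPoly, pow_succ']
  | succ m => rw [abelPoly, mul_assoc, ← pow_add, show m + (n + 1 - (m + 1)) = n by omega]

-- `y + 1 + (m - 1)` rather than `y + m`: the shape of the summands of `abelSum _ _ (y + 1)`.
lemma abelPoly_eq_pow_sub (y : ℝ) (m : ℕ) :
    abelPoly y m = (y + m) ^ m - m * (y + 1 + (m - 1 : ℕ)) ^ (m - 1) := by
  cases m with
  | zero => simp [abelPoly]
  | succ j => simp only [abelPoly, Nat.add_sub_cancel]; push_cast; ring

lemma hasDerivAt_add_natCast_pow (m : ℕ) (y : ℝ) :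
    HasDerivAt (fun y : ℝ => (y + m) ^ m) (m * (y + 1 + (m - 1 : ℕ)) ^ (m - 1)) y := by
  cases m with
  | zero => simpa using hasDerivAt_const y (1 : ℝ)
  | succ j =>
    refine (((hasDerivAt_id y).add_const _).fun_pow (j + 1)).congr_deriv ?_
    push_cast; simp only [id]; ring

lemma sum_range_neg_one_pow_mul_choose_mul_pow {R : Type*} [CommRing R] {j n : ℕ} (h : j < n)
    (y : R) : ∑ k ∈ range (n + 1), (-1) ^ (n - k) * n.choose k * (y + k) ^ j = 0 := by
  have := congrFun (fwdDiff_iter_pow_eq_zero_of_lt (R := R) h) y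
  rw [fwdDiff_iter_eq_sum_shift] at this
  simpa [zsmul_eq_mul] using this

lemma sum_range_succ_choose_mul_sub_mul (m : ℕ) (f : ℕ → ℝ) :
    ∑ k ∈ range (m + 2), ((m + 1).choose k : ℝ) * ((m + 1 - k : ℕ) : ℝ) * f k
      = (m + 1) * ∑ k ∈ range (m + 1), (m.choose k : ℝ) * f k := by
  rw [sum_range_succ, Nat.sub_self, Nat.cast_zero, mul_zero, zero_mul, add_zero, mul_sum]
  refine sum_congr rfl fun k _ => ?_
  have h : ((m + 1).choose k : ℝ) * ((m + 1 - k : ℕ) : ℝ) = m.choose k * (m + 1) := by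
    exact_mod_cast (Nat.choose_mul_succ_eq m k).symm
  rw [h]; ring

noncomputable def abelSum (x : ℝ) (n : ℕ) (y : ℝ) : ℝ :=
  ∑ k ∈ range (n + 1), (n.choose k : ℝ) * abelPoly x k * (y + (n - k : ℕ)) ^ (n - k)

lemma hasDerivAt_abelSum (x : ℝ) (n : ℕ) (y : ℝ) :
    HasDerivAt (abelSum x (n + 1)) ((n + 1) * abelSum x n (y + 1)) y := by
  have h := HasDerivAt.fun_sum (u := range (n + 2)) fun k _ =>
    (hasDerivAt_add_natCast_pow (n + 1 - k) y).const_mul (((n + 1).choose k : ℝ) * abelPoly x k)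
  have hD : ((n : ℝ) + 1) * abelSum x n (y + 1) = ∑ k ∈ range (n + 2),
      ((n + 1).choose k : ℝ) * abelPoly x k
        * ((n + 1 - k : ℕ) * (y + 1 + (n + 1 - k - 1 : ℕ)) ^ (n + 1 - k - 1)) := by
    have hreindex := sum_range_succ_choose_mul_sub_mul n
      fun k => abelPoly x k * (y + 1 + (n - k : ℕ)) ^ (n - k)
    simp only [abelSum, mul_assoc] at hreindex ⊢
    rw [← hreindex]
    refine sum_congr rfl fun k _ => ?_
    rw [show n + 1 - k - 1 = n - k by omega]; ring
  rw [hD]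
  exact h

lemma abelSum_succ_neg_sub_eq_zero (x : ℝ) (n : ℕ) : abelSum x (n + 1) (-x - (n + 1)) = 0 := by
  have hterm : ∀ k ∈ range (n + 2), ((n + 1).choose k : ℝ) * abelPoly x k
      * (-x - (n + 1) + (n + 1 - k : ℕ)) ^ (n + 1 - k)
      = x * ((-1) ^ (n + 1 - k) * (n + 1).choose k * (x + k) ^ n) := by
    intro k hk
    have hk : k ≤ n + 1 := Nat.lt_succ_iff.mp (mem_range.mp hk)
    rw [Nat.cast_sub hk,
      show -x - (n + 1) + ((n + 1 : ℕ) - k : ℝ) = -1 * (x + k) by push_cast; ring, mul_pow]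
    linear_combination ((n + 1).choose k * (-1 : ℝ) ^ (n + 1 - k)) * abelPoly_mul_pow x hk
  rw [abelSum, sum_congr rfl hterm, ← mul_sum,
    sum_range_neg_one_pow_mul_choose_mul_pow (Nat.lt_succ_self n), mul_zero]

theorem abelSum_eq (x : ℝ) (n : ℕ) (y : ℝ) : abelSum x n y = (x + y + n) ^ n := by
  induction n generalizing y with
  | zero => simp [abelSum, abelPoly]
  | succ n ih =>
    have hG : ∀ y, HasDerivAt (fun y => (x + y + (n + 1 : ℕ)) ^ (n + 1))
        ((n + 1) * abelSum x n (y + 1)) y := by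
      intro y
      rw [ih]
      refine ((((hasDerivAt_id y).const_add x).add_const _).fun_pow (n + 1)).congr_deriv ?_
      push_cast; simp only [id]; ring
    have hF := hasDerivAt_abelSum x n
    have heq := eq_of_fderiv_eq (𝕜 := ℝ) (fun y => (hF y).differentiableAt)
      (fun y => (hG y).differentiableAt)
      (fun y => (hF y).hasFDerivAt.fderiv.trans (hG y).hasFDerivAt.fderiv.symm) (-x - (n + 1))
      (by rw [abelSum_succ_neg_sub_eq_zero]; push_cast; ring)
    exact congrFun heq y

theorem abelPoly_add (x y : ℝ) (n : ℕ) :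
    abelPoly (x + y) n
      = ∑ k ∈ range (n + 1), (n.choose k : ℝ) * abelPoly x k * abelPoly y (n - k) := by
  cases n with
  | zero => simp [abelPoly]
  | succ m =>
    have hterm : ∀ k ∈ range (m + 2),
        ((m + 1).choose k : ℝ) * abelPoly x k * abelPoly y (m + 1 - k)
          = (m + 1).choose k * abelPoly x k * (y + (m + 1 - k : ℕ)) ^ (m + 1 - k)
            - (m + 1).choose k * (m + 1 - k : ℕ)
              * (abelPoly x k * (y + 1 + (m - k : ℕ)) ^ (m - k)) := by
      intro k _
      rw [abelPoly_eq_pow_sub y, show m + 1 - k - 1 = m - k by omega]; ring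
    have hF := abelSum_eq x (m + 1) y
    have hG := abelSum_eq x m (y + 1)
    rw [abelSum] at hF hG
    rw [sum_congr rfl hterm, sum_sub_distrib, sum_range_succ_choose_mul_sub_mul]
    simp only [← mul_assoc] at hG ⊢
    rw [hF, hG, abelPoly]
    push_cast; ring

lemma natCast_succ_zpow_eq_abelPoly_one (j : ℕ) :
    ((j + 1 : ℕ) : ℝ) ^ ((j : ℤ) - 1) = abelPoly 1 j := by
  rw [abelPoly_eq_mul_zpow (by positivity), one_mul, Nat.cast_succ, add_comm]

/-- For every integer `k ≥ 2`,
`2 k^{k-3}/(k-2)! = Σ_{i=1}^{k-1} (i^{i-2}/(i-1)!)((k-i)^{k-i-2}/(k-i-1)!)`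
(powers interpreted as rational/real numbers, e.g. `2^{-1} = 1/2`). -/
theorem borel_convolution_identity (k : ℕ) (hk : 2 ≤ k) :
    2 * (k : ℝ) ^ ((k : ℤ) - 3) / (Nat.factorial (k - 2) : ℝ)
      = ∑ i ∈ Finset.Icc 1 (k - 1),
          ((i : ℝ) ^ ((i : ℤ) - 2) / (Nat.factorial (i - 1) : ℝ)) *
            (((k - i : ℕ) : ℝ) ^ ((k : ℤ) - (i : ℤ) - 2) /
              (Nat.factorial (k - i - 1) : ℝ)) := by
  obtain ⟨n, rfl⟩ : ∃ n, k = n + 2 := ⟨k - 2, by omega⟩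
  have hterm : ∀ j ∈ range (n + 1),
      (((1 + j : ℕ) : ℝ) ^ (((1 + j : ℕ) : ℤ) - 2) / (Nat.factorial (1 + j - 1) : ℝ)) *
        (((n + 2 - (1 + j) : ℕ) : ℝ) ^ (((n + 2 : ℕ) : ℤ) - ((1 + j : ℕ) : ℤ) - 2) /
          (Nat.factorial (n + 2 - (1 + j) - 1) : ℝ))
      = n.choose j * abelPoly 1 j * abelPoly 1 (n - j) / Nat.factorial n := by
    intro j hj
    have hj : j ≤ n := Nat.lt_succ_iff.mp (mem_range.mp hj)
    rw [show ((n + 2 : ℕ) : ℤ) - ((1 + j : ℕ) : ℤ) - 2 = ((n - j : ℕ) : ℤ) - 1 by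
        push_cast [Nat.cast_sub hj]; ring,
      show ((1 + j : ℕ) : ℤ) - 2 = (j : ℤ) - 1 by push_cast; ring,
      show n + 2 - (1 + j) = n - j + 1 by omega, add_comm 1 j, Nat.add_sub_cancel,
      Nat.add_sub_cancel, natCast_succ_zpow_eq_abelPoly_one, natCast_succ_zpow_eq_abelPoly_one,
      Nat.cast_choose ℝ hj]
    field_simp
  rw [← Ico_add_one_right_eq_Icc, sum_Ico_eq_sum_range, show n + 2 - 1 + 1 - 1 = n + 1 by omega,
    sum_congr rfl hterm, ← sum_div, ← abelPoly_add, abelPoly_eq_mul_zpow (by positivity)]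
  push_cast
  ring_nf
end
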